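/- Let D be a ghost-free diagram, S(D) = {(r,c) ∈ D : (r,c) ∉ R(D) and (r*,c) ∉ R(D) for all r* > r}, and define f_D(T̃) = T̃ \ S(D) for T̃ ∈ GKD(D). Then for every T ∈ GKD(D) and every row r > 0, G(f_D(T), r) = f_D(G(T, r)); that is, f_D commutes with ghost moves. -/
import Mathlib


open Finset

/-- A diagram: a finite set of cells in ℕ×ℕ (recorded as (row, column)),
some of which may be marked as ghost cells. -/
structure Diagram where
  cells : Finset (ℕ × ℕ)
  ghosts : Finset (ℕ × ℕ)
deriving DecidableEq

/-- `(r,c)` is the rightmost cell (ghost or not) in row `r` of `D`. -/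
def Rightmost (D : Diagram) (r c : ℕ) : Prop :=
  (r, c) ∈ D.cells ∧ ∀ c' > c, (r, c') ∉ D.cells

/-- A nontrivial K-Kohnert move at row `r` of `D` is possible, taking the
rightmost cell `(r,c)` of row `r` (a non-ghost cell) down to the highest empty
position `(rhat, c)` below it in column `c`, with no ghost cell in between. -/
def KohnertMovable (D : Diagram) (r c rhat : ℕ) : Prop :=
  Rightmost D r c ∧ (r, c) ∉ D.ghosts ∧
  1 ≤ rhat ∧ rhat < r ∧ (rhat, c) ∉ D.cells ∧
  ∀ r', rhat < r' → r' < r → (r', c) ∈ D.cells ∧ (r', c) ∉ D.ghosts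

/-- Result of a Kohnert move: the cell `(r,c)` moves to `(rhat,c)`. -/
def applyKohnert (D : Diagram) (r c rhat : ℕ) : Diagram :=
  ⟨insert (rhat, c) (D.cells.erase (r, c)), D.ghosts⟩

/-- Result of a ghost move: the cell `(r,c)` moves to `(rhat,c)`, leaving a
ghost cell at `(r,c)`. -/
def applyGhost (D : Diagram) (r c rhat : ℕ) : Diagram :=
  ⟨insert (rhat, c) D.cells, insert (r, c) D.ghosts⟩

/-- One (nontrivial) K-Kohnert move. -/
def KStep (D T : Diagram) : Prop :=
  ∃ r c rhat, KohnertMovable D r c rhat ∧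
    (T = applyKohnert D r c rhat ∨ T = applyGhost D r c rhat)

/-- One (nontrivial) ghost move. -/
def GStep (D T : Diagram) : Prop :=
  ∃ r c rhat, KohnertMovable D r c rhat ∧ T = applyGhost D r c rhat

/-- All diagrams obtainable from `D` by sequences of K-Kohnert moves. -/
def KKD (D : Diagram) : Set Diagram := {T | Relation.ReflTransGen KStep D T}

/-- All diagrams obtainable from `D` by sequences of ghost moves. -/
def GKD (D : Diagram) : Set Diagram := {T | Relation.ReflTransGen GStep D T}

/-- Maximum number of ghost cells over `KKD D`. -/
noncomputable def MaxG (D : Diagram) : ℕ :=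
  sSup {n | ∃ T ∈ KKD D, T.ghosts.card = n}

/-- Maximum number of ghost cells over `GKD D`. -/
noncomputable def MaxGhat (D : Diagram) : ℕ :=
  sSup {n | ∃ T ∈ GKD D, T.ghosts.card = n}

/-- Dark clouds of a ghost-free diagram: working from the top row down, mark in
each row the rightmost cell having no marked cell above it in its column. -/
def dark (D : Finset (ℕ × ℕ)) : Finset (ℕ × ℕ) :=
  ((List.range (D.sup Prod.fst + 1)).reverse).foldl
    (fun acc r =>
      let cand := (D.filter (fun p => p.1 = r ∧ ∀ q ∈ acc, q.2 ≠ p.2)).image Prod.snd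
      if h : cand.Nonempty then insert (r, cand.max' h) acc else acc) ∅

/-- Snowflakes of the snow diagram: empty positions lying below a dark cloud
in its column. -/
def snowflakes (D : Finset (ℕ × ℕ)) : Finset (ℕ × ℕ) :=
  ((Finset.range (D.sup Prod.fst + 1)) ×ˢ (D.image Prod.snd)).filter
    (fun p => 1 ≤ p.1 ∧ p ∉ D ∧ ∃ q ∈ dark D, q.2 = p.2 ∧ p.1 < q.1)

/-- Number of snowflakes of the snow diagram of a ghost-free diagram. -/
def sf (D : Finset (ℕ × ℕ)) : ℕ := (snowflakes D).card

/-- A generalized skew diagram: each nonempty row is a contiguous run of cells,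
and both leftmost and rightmost columns weakly increase with the row index. -/
def IsGenSkew (D : Finset (ℕ × ℕ)) : Prop :=
  (∀ p ∈ D, 1 ≤ p.1 ∧ 1 ≤ p.2) ∧
  (∀ r c₁ c c₂, (r, c₁) ∈ D → (r, c₂) ∈ D → c₁ ≤ c → c ≤ c₂ → (r, c) ∈ D) ∧
  (∀ r₁ r₂ c₁, r₁ < r₂ → (r₁, c₁) ∈ D → (∃ c, (r₂, c) ∈ D) →
      ∃ c₂, c₁ ≤ c₂ ∧ (r₂, c₂) ∈ D) ∧
  (∀ r₁ r₂ c₂, r₁ < r₂ → (r₂, c₂) ∈ D → (∃ c, (r₁, c) ∈ D) →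
      ∃ c₁, c₁ ≤ c₂ ∧ (r₁, c₁) ∈ D)

/-- `Key(D)`: the minimal key diagram containing `D`. -/
def keyOf (D : Finset (ℕ × ℕ)) : Finset (ℕ × ℕ) :=
  D.biUnion (fun p => (Finset.Icc 1 p.2).image (fun c => (p.1, c)))

/-- Largest index `i < j` (0-indexed) with `α_i > 0`. -/
def prevIdx (α : List ℕ) (j : ℕ) : Option ℕ :=
  ((List.range j).filter (fun i => 0 < α.getD i 0)).max?

/-- Contribution of step 2 of the skew-diagram construction at (0-indexed) row `j`. -/
def step2contrib (α : List ℕ) (j : ℕ) : ℕ :=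
  if 0 < α.getD j 0 then
    match prevIdx α j with
    | none => 0
    | some i => α.getD i 0 - α.getD j 0
  else 0

/-- Total rightward shift of (0-indexed) row `k` in the skew-diagram construction. -/
def rowShift (α : List ℕ) (k : ℕ) : ℕ :=
  (∑ j ∈ Finset.range (k + 1), step2contrib α j) +
    ((List.range k).filter (fun i => α.getD i 0 = 0)).length

/-- The skew diagram `S(α)` of a weak composition `α`. -/
def skewDiagram (α : List ℕ) : Finset (ℕ × ℕ) :=
  (Finset.range α.length).biUnion (fun i =>
    (Finset.Icc 1 (α.getD i 0)).image (fun c => (i + 1, c + rowShift α i)))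

/-- The lock diagram of a weak composition `α`: `α_i` right-justified cells in row `i`. -/
def lockDiagram (α : List ℕ) : Finset (ℕ × ℕ) :=
  (Finset.range α.length).biUnion (fun i =>
    (Finset.range (α.getD i 0)).image (fun j => (i + 1, α.foldr max 0 - j)))

/-- `L` is a lock-tableau labeling of content `α` on the given set of cells. -/
def IsLockLabeling (α : List ℕ) (cells : Finset (ℕ × ℕ)) (L : ℕ × ℕ → ℕ) : Prop :=
  (∀ p ∈ cells, 1 ≤ L p ∧ L p ≤ α.length) ∧
  (∀ j, 1 ≤ j → j ≤ α.length → 0 < α.getD (j - 1) 0 →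
    ∀ c, α.foldr max 0 - α.getD (j - 1) 0 + 1 ≤ c → c ≤ α.foldr max 0 →
      ∃! p, p ∈ cells ∧ p.2 = c ∧ L p = j) ∧
  (∀ p ∈ cells, p.1 ≤ L p) ∧
  (∀ p ∈ cells, ∀ q ∈ cells, L p = L q → p.2 < q.2 → q.1 ≤ p.1) ∧
  (∀ p ∈ cells, ∀ q ∈ cells, p.2 = q.2 → p.1 < q.1 → L p < L q)

/-- Label of the position `(r,c)` of `T`: for a ghost cell, the label of the
highest non-ghost cell weakly below it in column `c`. -/
def ghostLabel (T : Diagram) (L : ℕ × ℕ → ℕ) (r c : ℕ) : ℕ :=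
  L (((T.cells \ T.ghosts).filter (fun p => p.2 = c ∧ p.1 ≤ r)).sup Prod.fst, c)

/-- The labels, within one column with row set `Rc`, of the modified snow
diagram, where `U` is the set of rows occupied in later columns; rows are
processed from top to bottom. -/
def colLabelList (Rc U : Finset ℕ) : List (ℕ × ℕ) :=
  ((Rc.sort (· ≤ ·)).reverse).foldl
    (fun acc r =>
      if r ∈ U then (r, r) :: acc
      else
        let cand := U.filter (fun s => s < r ∧ ∀ q ∈ acc, q.2 ≠ s)
        if h : cand.Nonempty then (r, cand.max' h) :: acc else (r, 1) :: acc)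
    []

/-- The label of a cell `p ∈ D` in the modified snow diagram `snow-hat(D)`. -/
def hatLabel (D : Finset (ℕ × ℕ)) (p : ℕ × ℕ) : ℕ :=
  ((colLabelList ((D.filter (fun q => q.2 = p.2)).image Prod.fst)
      ((D.filter (fun q => p.2 < q.2)).image Prod.fst)).lookup p.1).getD 0

/-- Number of snowflakes of the modified snow diagram `snow-hat(D)`. -/
def sfhat (D : Finset (ℕ × ℕ)) : ℕ :=
  (((Finset.range (D.sup Prod.fst + 1)) ×ˢ (D.image Prod.snd)).filter
    (fun p => 1 ≤ p.1 ∧ p ∉ D ∧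
      ∃ q ∈ D, q.2 = p.2 ∧ p.1 < q.1 ∧ hatLabel D q ≤ p.1)).card

/-- Cells of `D` that are rightmost in their row. -/
def rmostCells (D : Finset (ℕ × ℕ)) : Finset (ℕ × ℕ) :=
  D.filter (fun p => ∀ q ∈ D, q.1 = p.1 → q.2 ≤ p.2)

/-- `S(D)`: cells that are not rightmost in their row and such that no cell
above them in their column is rightmost in its row. -/
def SofD (D : Finset (ℕ × ℕ)) : Finset (ℕ × ℕ) :=
  D.filter (fun p => p ∉ rmostCells D ∧
    ∀ q ∈ D, q.2 = p.2 → p.1 < q.1 → q ∉ rmostCells D)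

/-- Restriction of `D` to the columns in `C`. -/
def Res (D : Finset (ℕ × ℕ)) (C : Finset ℕ) : Finset (ℕ × ℕ) :=
  D.filter (fun p => p.2 ∈ C)

open Classical in
/-- The ghost move at row `r`, as a function (identity when no move is possible). -/
noncomputable def gmove (T : Diagram) (r : ℕ) : Diagram :=
  if h : ∃ p : ℕ × ℕ, KohnertMovable T r p.1 p.2 then
    applyGhost T r h.choose.1 h.choose.2
  else T

section Aux

lemma mem_rmostCells' {D : Finset (ℕ × ℕ)} {p : ℕ × ℕ} :
    p ∈ rmostCells D ↔ p ∈ D ∧ ∀ q ∈ D, q.1 = p.1 → q.2 ≤ p.2 := by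
  simp [rmostCells]

lemma mem_SofD' {D : Finset (ℕ × ℕ)} {p : ℕ × ℕ} :
    p ∈ SofD D ↔ p ∈ D ∧ p ∉ rmostCells D ∧
      ∀ q ∈ D, q.2 = p.2 → p.1 < q.1 → q ∉ rmostCells D := by
  simp [SofD, Finset.mem_filter]

lemma not_rmost_exists {D : Finset (ℕ × ℕ)} {r c : ℕ}
    (h : (r, c) ∈ D) (h2 : (r, c) ∉ rmostCells D) :
    ∃ c₂, c < c₂ ∧ (r, c₂) ∈ D := by
  by_contra hc
  push_neg at hc
  refine h2 (mem_rmostCells'.mpr ⟨h, ?_⟩)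
  rintro ⟨q1, q2⟩ hq hq1
  simp only at hq1 ⊢
  subst hq1
  by_contra hle
  push_neg at hle
  exact hc q2 hle hq

lemma mem_colset {D : Finset (ℕ × ℕ)} {r c' : ℕ} :
    c' ∈ (D.filter (fun p => p.1 = r)).image Prod.snd ↔ (r, c') ∈ D := by
  constructor
  · intro h
    obtain ⟨⟨a, b⟩, hab, rfl⟩ := Finset.mem_image.mp h
    obtain ⟨hD, ha⟩ := Finset.mem_filter.mp hab
    simp only at ha
    subst ha
    exact hD
  · intro h
    exact Finset.mem_image.mpr ⟨(r, c'), Finset.mem_filter.mpr ⟨h, rfl⟩, rfl⟩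

/-- A cell of `S(D)` has a cell strictly to its right in `D` that is not in `S(D)`. -/
lemma SofD_right {D : Finset (ℕ × ℕ)} {r c : ℕ} (h : (r, c) ∈ SofD D) :
    ∃ c₂, c < c₂ ∧ (r, c₂) ∈ D ∧ (r, c₂) ∉ SofD D := by
  obtain ⟨hD, hnr, -⟩ := mem_SofD'.mp h
  have hne : ((D.filter (fun p => p.1 = r)).image Prod.snd).Nonempty :=
    ⟨c, mem_colset.mpr hD⟩
  obtain ⟨c₂, hc₂, hc₂D⟩ := not_rmost_exists hD hnr
  have hrm : (r, Finset.max' _ hne) ∈ rmostCells D := by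
    refine mem_rmostCells'.mpr ⟨mem_colset.mp (Finset.max'_mem _ hne), ?_⟩
    rintro ⟨q1, q2⟩ hq hq1
    simp only at hq1 ⊢
    subst hq1
    exact Finset.le_max' _ q2 (mem_colset.mpr hq)
  refine ⟨Finset.max' _ hne, ?_, mem_colset.mp (Finset.max'_mem _ hne), ?_⟩
  · exact hc₂.trans_le (Finset.le_max' _ _ (mem_colset.mpr hc₂D))
  · exact fun hS => (mem_SofD'.mp hS).2.1 hrm

lemma GKD_cells_subset {D₀ T : Diagram} (hT : T ∈ GKD D₀) : D₀.cells ⊆ T.cells := by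
  induction hT with
  | refl => exact Finset.Subset.refl _
  | tail _ hstep ih =>
    obtain ⟨r, c, rhat, _, rfl⟩ := hstep
    exact ih.trans (Finset.subset_insert _ _)

/-- The key invariant: every cell of `T` strictly above a cell of `S(D)` in its
column has a cell strictly to its right in `T`. -/
lemma GKD_inv {D : Finset (ℕ × ℕ)} {T : Diagram} (hT : T ∈ GKD ⟨D, ∅⟩) :
    ∀ a b c, (a, c) ∈ SofD D → a < b → (b, c) ∈ T.cells →
      ∃ c₂, c < c₂ ∧ (b, c₂) ∈ T.cells := by
  induction hT with
  | refl =>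
    intro a b c hS hab hb
    have h3 := (mem_SofD'.mp hS).2.2 (b, c) hb rfl hab
    exact not_rmost_exists hb h3
  | tail _ hstep ih =>
    obtain ⟨r, c₀, rhat, hmov, rfl⟩ := hstep
    intro a b c hS hab hb
    simp only [applyGhost, Finset.mem_insert] at hb
    rcases hb with hb | hb
    · -- (b,c) = (rhat,c₀): impossible, since then (r,c₀) is above an S-cell
      exfalso
      rw [Prod.mk.injEq] at hb
      obtain ⟨rfl, rfl⟩ := hb
      obtain ⟨c₂, hc₂, hmem⟩ := ih a r c hS (hab.trans hmov.2.2.2.1) hmov.1.1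
      exact hmov.1.2 c₂ hc₂ hmem
    · obtain ⟨c₂, hc₂, hmem⟩ := ih a b c hS hab hb
      exact ⟨c₂, hc₂, Finset.mem_insert_of_mem hmem⟩

lemma rightmost_sdiff_iff {D : Finset (ℕ × ℕ)} {T : Diagram}
    (hsub : D ⊆ T.cells) {r c : ℕ} :
    Rightmost ⟨T.cells \ SofD D, T.ghosts⟩ r c ↔ Rightmost T r c := by
  constructor
  · rintro ⟨h1, h2⟩
    simp only [Finset.mem_sdiff] at h1
    refine ⟨h1.1, fun c' hc' hmem => ?_⟩
    by_cases hS : (r, c') ∈ SofD D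
    · obtain ⟨c₂, hc₂, hD, hnS⟩ := SofD_right hS
      exact h2 c₂ (hc'.trans hc₂) (by simp [Finset.mem_sdiff]; exact ⟨hsub hD, hnS⟩)
    · exact h2 c' hc' (by simp [Finset.mem_sdiff]; exact ⟨hmem, hS⟩)
  · rintro ⟨h1, h2⟩
    have hnS : (r, c) ∉ SofD D := by
      intro hS
      obtain ⟨c₂, hc₂, hD, -⟩ := SofD_right hS
      exact h2 c₂ hc₂ (hsub hD)
    refine ⟨by simp [Finset.mem_sdiff]; exact ⟨h1, hnS⟩, fun c' hc' hmem => ?_⟩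
    exact h2 c' hc' (Finset.mem_sdiff.mp hmem).1

lemma no_S_below {D : Finset (ℕ × ℕ)} {T : Diagram} (hsub : D ⊆ T.cells)
    (hinv : ∀ a b c, (a, c) ∈ SofD D → a < b → (b, c) ∈ T.cells →
      ∃ c₂, c < c₂ ∧ (b, c₂) ∈ T.cells)
    {r c : ℕ} (hrm : Rightmost T r c) : ∀ a, a ≤ r → (a, c) ∉ SofD D := by
  intro a ha hS
  rcases eq_or_lt_of_le ha with rfl | hlt
  · obtain ⟨c₂, hc₂, hD, -⟩ := SofD_right hS
    exact hrm.2 c₂ hc₂ (hsub hD)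
  · obtain ⟨c₂, hc₂, hmem⟩ := hinv a r c hS hlt hrm.1
    exact hrm.2 c₂ hc₂ hmem

lemma movable_sdiff_iff {D : Finset (ℕ × ℕ)} {T : Diagram} (hsub : D ⊆ T.cells)
    (hinv : ∀ a b c, (a, c) ∈ SofD D → a < b → (b, c) ∈ T.cells →
      ∃ c₂, c < c₂ ∧ (b, c₂) ∈ T.cells)
    {r c rhat : ℕ} :
    KohnertMovable ⟨T.cells \ SofD D, T.ghosts⟩ r c rhat ↔ KohnertMovable T r c rhat := by
  constructor
  · rintro ⟨hrm', hg, h1, h2, h3, h4⟩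
    have hrm := (rightmost_sdiff_iff hsub).mp hrm'
    have noS := no_S_below hsub hinv hrm
    refine ⟨hrm, hg, h1, h2, ?_, fun r' hr1 hr2 => ?_⟩
    · intro hmem
      exact h3 (by simp [Finset.mem_sdiff]; exact ⟨hmem, noS rhat h2.le⟩)
    · obtain ⟨ha, hb⟩ := h4 r' hr1 hr2
      exact ⟨(Finset.mem_sdiff.mp ha).1, hb⟩
  · rintro ⟨hrm, hg, h1, h2, h3, h4⟩
    have noS := no_S_below hsub hinv hrm
    refine ⟨(rightmost_sdiff_iff hsub).mpr hrm, hg, h1, h2, ?_, fun r' hr1 hr2 => ?_⟩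
    · intro hmem
      exact h3 (Finset.mem_sdiff.mp hmem).1
    · obtain ⟨ha, hb⟩ := h4 r' hr1 hr2
      exact ⟨by simp [Finset.mem_sdiff]; exact ⟨ha, noS r' hr2.le⟩, hb⟩

lemma movable_unique {T : Diagram} {r c₁ rh₁ c₂ rh₂ : ℕ}
    (h1 : KohnertMovable T r c₁ rh₁) (h2 : KohnertMovable T r c₂ rh₂) :
    c₁ = c₂ ∧ rh₁ = rh₂ := by
  have hc : c₁ = c₂ := by
    rcases lt_trichotomy c₁ c₂ with h | h | h
    · exact absurd h2.1.1 (h1.1.2 c₂ h)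
    · exact h
    · exact absurd h1.1.1 (h2.1.2 c₁ h)
  subst hc
  constructor
  · rfl
  · rcases lt_trichotomy rh₁ rh₂ with h | h | h
    · exact absurd (h1.2.2.2.2.2 rh₂ h h2.2.2.2.1).1 h2.2.2.2.2.1
    · exact h
    · exact absurd (h2.2.2.2.2.2 rh₁ h h1.2.2.2.1).1 h1.2.2.2.2.1

end Aux

/-- The reduction f_D(T) = T \ S(D) commutes with ghost moves on
GKD(D). -/
theorem reduction_commutes_with_ghost_moves (D : Finset (ℕ × ℕ)) :
    ∀ T ∈ GKD ⟨D, ∅⟩, ∀ r : ℕ, 0 < r →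
      gmove (⟨T.cells \ SofD D, T.ghosts⟩ : Diagram) r =
        ⟨(gmove T r).cells \ SofD D, (gmove T r).ghosts⟩ := by
  intro T hT r hr
  have hsub : D ⊆ T.cells := GKD_cells_subset hT
  have hinv := GKD_inv hT
  by_cases h : ∃ p : ℕ × ℕ, KohnertMovable T r p.1 p.2
  · have h' : ∃ p : ℕ × ℕ, KohnertMovable (⟨T.cells \ SofD D, T.ghosts⟩ : Diagram) r p.1 p.2 :=
      ⟨h.choose, (movable_sdiff_iff hsub hinv).mpr h.choose_spec⟩
    rw [gmove, gmove, dif_pos h, dif_pos h']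
    have e1 : KohnertMovable T r h'.choose.1 h'.choose.2 :=
      (movable_sdiff_iff hsub hinv).mp h'.choose_spec
    obtain ⟨ec, er⟩ := movable_unique e1 h.choose_spec
    rw [ec, er]
    have hnS : (h.choose.2, h.choose.1) ∉ SofD D :=
      no_S_below hsub hinv h.choose_spec.1 _ h.choose_spec.2.2.2.1.le
    simp only [applyGhost]
    congr 1
    ext p
    simp only [Finset.mem_insert, Finset.mem_sdiff]
    constructor
    · rintro (rfl | ⟨hp, hnp⟩)
      · exact ⟨Or.inl rfl, hnS⟩
      · exact ⟨Or.inr hp, hnp⟩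
    · rintro ⟨rfl | hp, hnp⟩
      · exact Or.inl rfl
      · exact Or.inr ⟨hp, hnp⟩
  · have h' : ¬ ∃ p : ℕ × ℕ, KohnertMovable (⟨T.cells \ SofD D, T.ghosts⟩ : Diagram) r p.1 p.2 :=
      fun ⟨p, hp⟩ => h ⟨p, (movable_sdiff_iff hsub hinv).mp hp⟩
    rw [gmove, gmove, dif_neg h, dif_neg h']
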